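/- There exists a binary sequence that is almost periodic but not eventually strongly almost periodic. Concretely, define a_0 = 1, a_{n+1} = a_n ā_n ā_n a_n a_n (where ā denotes bitwise complement), c_n = a_n a_n a_n a_n, and ω = c_0 c_1 c_2 ⋯; then ω is almost periodic but no suffix of ω is strongly almost periodic. -/

import Mathlib

/-- The factor of `ω` starting at `i` of length `n`. -/
def seg {α : Type*} (ω : ℕ → α) (i n : ℕ) : List α :=
  (List.range n).map (fun k => ω (i + k))

/-- `x` occurs in `ω` at position `i`. -/
def OccursAt {α : Type*} (ω : ℕ → α) (x : List α) (i : ℕ) : Prop :=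
  seg ω i x.length = x

/-- Strongly almost periodic: every factor occurs in every sufficiently long factor. -/
def SAP {α : Type*} (ω : ℕ → α) : Prop :=
  ∀ x : List α, (∃ i, OccursAt ω x i) →
    ∃ l, ∀ j, ∃ i, j ≤ i ∧ i + x.length ≤ j + l ∧ OccursAt ω x i

/-- Almost periodic: every factor occurring infinitely often occurs in every
sufficiently long factor. -/
def AP {α : Type*} (ω : ℕ → α) : Prop :=
  ∀ x : List α, {i | OccursAt ω x i}.Infinite →
    ∃ l, ∀ j, ∃ i, j ≤ i ∧ i + x.length ≤ j + l ∧ OccursAt ω x i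

/-- Eventually strongly almost periodic: some suffix is strongly almost periodic. -/
def EAP {α : Type*} (ω : ℕ → α) : Prop :=
  ∃ n, SAP (fun i => ω (n + i))

/-- `a_0 = 1`, `a_{n+1} = a_n ā_n ā_n a_n a_n`. -/
def aStr : ℕ → List Bool
  | 0 => [true]
  | n + 1 => aStr n ++ (aStr n).map (fun b => !b) ++ (aStr n).map (fun b => !b)
      ++ aStr n ++ aStr n

/-- `c_n = a_n a_n a_n a_n`. -/
def cStr (n : ℕ) : List Bool := aStr n ++ aStr n ++ aStr n ++ aStr n

/-- The prefix `c_0 c_1 ⋯ c_{n-1}` of the sequence `ω`. -/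
def prefW (n : ℕ) : List Bool := ((List.range n).map cStr).flatten

/-- The sequence `ω = c_0 c_1 c_2 ⋯` (note `|prefW (i+1)| = 5^{i+1} - 1 > i`). -/
def omegaAP (i : ℕ) : Bool := (prefW (i + 1)).getD i false

/-!
Write `σ` for the substitution `b ↦ b b̄ b̄ b b`, so that `a_k = σᵏ(1)` and `c_k = σᵏ(1111)`.
Since `c_0 ⋯ c_{k+j-1} = c_0 ⋯ c_{k-1} σᵏ(c_0 ⋯ c_{j-1})`, the sequence `ω` read from position
`5^k - 1` on is `σᵏ(ω)`.

Almost periodicity: a factor `x` occurring beyond position `5^|x|` lies inside two consecutive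
blocks `σ^|x|(b₁) σ^|x|(b₂)`; every two-letter word is a factor of `σ(c)` for both letters `c`, so
`x` is a factor of every block `σ^(|x|+1)(c)`, and these blocks tile `ω` from `5^(|x|+1) - 1` on.

Not eventually strongly almost periodic: beyond position `5^k - 1` the blocks `σᵏ(b)` can only
occur at aligned positions (a finite check for `k = 1`, lifted to all `k` using
`σᵏ⁺¹(b) = σᵏ(σ(b))`). So a late occurrence of `c_k = σᵏ(1111)` would give a late occurrence of
`1111` in `ω`; but from position 4 on, `ω = σ(ω)` has no run of four equal letters.
-/

section Factors

variable {α : Type*} (ω : ℕ → α)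

theorem length_seg (s n : ℕ) : (seg ω s n).length = n := by simp [seg]

theorem seg_add (s a b : ℕ) : seg ω s (a + b) = seg ω s a ++ seg ω (s + a) b := by
  simp [seg, List.range_add, Function.comp_def, Nat.add_assoc]

theorem seg_one (s : ℕ) : seg ω s 1 = [ω s] := rfl

theorem seg_add_eq_take_drop {s r L L' : ℕ} (h : r + L' ≤ L) :
    seg ω (s + r) L' = ((seg ω s L).drop r).take L' := by
  obtain ⟨e, rfl⟩ := Nat.exists_eq_add_of_le h
  rw [Nat.add_assoc, seg_add, seg_add, List.drop_left' (length_seg ..),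
    List.take_left' (length_seg ..)]

theorem seg_eq_take_drop {l : List α} (hl : ∀ i (hi : i < l.length), ω i = l[i])
    {s L : ℕ} (h : s + L ≤ l.length) : seg ω s L = (l.drop s).take L := by
  apply List.ext_getElem (by simp [length_seg]; omega)
  intro i hi _
  simp only [seg, List.getElem_map, List.getElem_range, List.getElem_take, List.getElem_drop]
  exact hl _ _

variable {ω}

theorem OccursAt.of_prefix {u x : List α} {p : ℕ} (h : OccursAt ω x p) (hu : u <+: x) :
    OccursAt ω u p := by
  obtain ⟨v, rfl⟩ := hu
  unfold OccursAt at *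
  rw [List.length_append, seg_add] at h
  exact (List.append_inj h (length_seg ..)).1

theorem OccursAt.infix_seg {x : List α} {p s L : ℕ} (hx : OccursAt ω x p) (hs : s ≤ p)
    (hL : p + x.length ≤ s + L) : x <:+: seg ω s L := by
  obtain ⟨r, rfl⟩ := Nat.exists_eq_add_of_le hs
  rw [← hx, seg_add_eq_take_drop ω (L := L) (by omega)]
  exact (List.take_prefix _ _).isInfix.trans (List.drop_suffix _ _).isInfix

theorem exists_occursAt_of_infix_seg {x : List α} {s L : ℕ} (h : x <:+: seg ω s L) :
    ∃ i, s ≤ i ∧ i + x.length ≤ s + L ∧ OccursAt ω x i := by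
  obtain ⟨u, v, h⟩ := h
  have hL : L = u.length + (x.length + v.length) := by
    simpa [length_seg, Nat.add_assoc] using (congrArg List.length h).symm
  rw [hL, seg_add, seg_add, ← List.append_assoc] at h
  obtain ⟨h', -⟩ := List.append_inj h.symm (by simp [length_seg])
  exact ⟨s + u.length, by omega, by omega, (List.append_inj h' (length_seg ..)).2⟩

theorem occursAt_shift_iff {n : ℕ} {x : List α} {i : ℕ} :
    OccursAt (fun t => ω (n + t)) x i ↔ OccursAt ω x (n + i) := by
  simp [OccursAt, seg, Nat.add_assoc]

end Factors

namespace OmegaAP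

/-- `block k b = σᵏ(b)` and `blocks k w = σᵏ(w)`; in particular `block k true = a_k`. -/
def block (k : ℕ) (b : Bool) : List Bool := if b then aStr k else (aStr k).map (!·)

def blocks (k : ℕ) (w : List Bool) : List Bool := w.flatMap (block k)

theorem length_aStr (n : ℕ) : (aStr n).length = 5 ^ n := by
  induction n with
  | zero => rfl
  | succ n ih => simp only [aStr, List.length_append, List.length_map, ih]; ring

theorem length_block (k : ℕ) (b : Bool) : (block k b).length = 5 ^ k := by
  cases b <;> simp [block, length_aStr]

theorem block_zero (b : Bool) : block 0 b = [b] := by cases b <;> rfl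

theorem block_succ (k : ℕ) (b : Bool) :
    block (k + 1) b = block k b ++ block k (!b) ++ block k (!b) ++ block k b ++ block k b := by
  cases b <;> simp [block, aStr, Function.comp_def]

theorem head?_block (k : ℕ) (b : Bool) : (block k b).head? = some b := by
  induction k with
  | zero => simp [block_zero]
  | succ k ih => simp [block_succ, List.head?_append, ih]

theorem block_injective (k : ℕ) : Function.Injective (block k) := fun _ _ h => by
  simpa [head?_block] using congrArg List.head? h

@[simp]
theorem blocks_nil (k : ℕ) : blocks k [] = [] := rfl

@[simp]
theorem blocks_cons (k : ℕ) (b : Bool) (w : List Bool) :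
    blocks k (b :: w) = block k b ++ blocks k w := rfl

@[simp]
theorem blocks_append (k : ℕ) (u v : List Bool) :
    blocks k (u ++ v) = blocks k u ++ blocks k v := List.flatMap_append

theorem blocks_singleton (k : ℕ) (b : Bool) : blocks k [b] = block k b := by simp

theorem length_blocks (k : ℕ) (w : List Bool) : (blocks k w).length = w.length * 5 ^ k := by
  induction w with
  | nil => simp
  | cons b w ih => simp [length_block, ih]; ring

theorem blocks_injective (k : ℕ) : Function.Injective (blocks k) := by
  intro u
  induction u with
  | nil => intro v h; simpa [length_blocks, eq_comm] using congrArg List.length h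
  | cons a u ih =>
    rintro (_ | ⟨b, v⟩) h
    · have := congrArg List.length h
      simp [length_block, length_blocks] at this
    · obtain ⟨hab, huv⟩ := List.append_inj h (by simp [length_block])
      rw [block_injective k hab, ih huv]

theorem drop_blocks (k m : ℕ) (w : List Bool) :
    (blocks k w).drop (m * 5 ^ k) = blocks k (w.drop m) := by
  induction w generalizing m with
  | nil => simp
  | cons b w ih =>
    cases m with
    | zero => simp
    | succ m =>
      simp [Nat.succ_mul, List.drop_append, length_block, ih]

theorem take_blocks (k n : ℕ) (w : List Bool) :
    (blocks k w).take (n * 5 ^ k) = blocks k (w.take n) := by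
  induction w generalizing n with
  | nil => simp
  | cons b w ih =>
    cases n with
    | zero => simp
    | succ n =>
      simp [Nat.succ_mul, List.take_append, length_block, ih]

theorem block_add (k j : ℕ) (b : Bool) : block (k + j) b = blocks k (block j b) := by
  induction j generalizing b with
  | zero => rw [block_zero, blocks_singleton]; rfl
  | succ j ih => simp only [← Nat.add_assoc, block_succ, ih, blocks_append]

theorem cStr_add (k j : ℕ) : cStr (k + j) = blocks k (cStr j) := by
  have h := block_add k j true
  simp only [block, if_true] at h
  simp [cStr, h]

theorem prefW_add (k j : ℕ) : prefW (k + j) = prefW k ++ blocks k (prefW j) := by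
  induction j with
  | zero => simp [prefW]
  | succ j ih => simp [prefW, List.range_succ, ← Nat.add_assoc] at ih ⊢; simp [ih, cStr_add]

theorem length_prefW (n : ℕ) : (prefW n).length = 5 ^ n - 1 := by
  induction n with
  | zero => rfl
  | succ n ih =>
    have : 0 < 5 ^ n := by positivity
    simp only [prefW, List.range_succ, List.map_append, List.flatten_append] at ih ⊢
    simp [ih, cStr, length_aStr, pow_succ]
    omega

theorem prefW_prefix {n m : ℕ} (h : n ≤ m) : prefW n <+: prefW m := by
  obtain ⟨j, rfl⟩ := Nat.exists_eq_add_of_le h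
  exact ⟨_, (prefW_add n j).symm⟩

theorem omegaAP_eq_getElem {n i : ℕ} (hi : i < (prefW n).length) :
    omegaAP i = (prefW n)[i] := by
  have hi' : i < (prefW (i + 1)).length := by
    rw [length_prefW]; exact Nat.lt_sub_of_add_lt (Nat.lt_pow_self (by norm_num))
  rw [omegaAP, List.getD_eq_getElem _ _ hi']
  rcases le_total n (i + 1) with h | h
  · exact ((prefW_prefix h).getElem hi).symm
  · exact (prefW_prefix h).getElem hi'

theorem seg_omegaAP (n : ℕ) {s L : ℕ} (h : s + L ≤ 5 ^ n - 1) :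
    seg omegaAP s L = ((prefW n).drop s).take L :=
  seg_eq_take_drop _ (fun _ => omegaAP_eq_getElem) (by rwa [length_prefW])

theorem seg_omegaAP_blocks (k m n : ℕ) :
    seg omegaAP (5 ^ k - 1 + m * 5 ^ k) (n * 5 ^ k) = blocks k (seg omegaAP m n) := by
  have hmn : m + n ≤ 5 ^ (m + n) - 1 := Nat.le_sub_one_of_lt (Nat.lt_pow_self (by norm_num))
  have hk : 0 < 5 ^ k := by positivity
  have hlen : 5 ^ k - 1 + m * 5 ^ k + n * 5 ^ k ≤ 5 ^ (k + (m + n)) - 1 := by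
    have := Nat.mul_le_mul_right (5 ^ k)
      (Nat.add_le_of_le_sub (Nat.one_le_pow _ _ (by norm_num)) hmn)
    rw [pow_add, mul_comm (5 ^ k)]
    rw [add_mul, add_mul, one_mul] at this
    omega
  rw [seg_omegaAP _ hlen, prefW_add, ← length_prefW k, List.drop_length_add_append, drop_blocks,
    take_blocks, seg_omegaAP _ hmn]

theorem seg_omegaAP_block (k m : ℕ) :
    seg omegaAP (5 ^ k - 1 + m * 5 ^ k) (5 ^ k) = block k (omegaAP m) := by
  simpa [seg_one, blocks_singleton] using seg_omegaAP_blocks k m 1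

theorem occursAt_cStr (k : ℕ) : OccursAt omegaAP (cStr k) (5 ^ k - 1) := by
  have hk : 5 ^ k - 1 + (cStr k).length = 5 ^ (k + 1) - 1 := by
    have := length_prefW (k + 1)
    rwa [prefW_add k 1, List.length_append, length_prefW, show prefW 1 = cStr 0 from rfl,
      ← cStr_add] at this
  rw [OccursAt, seg_omegaAP (k + 1) hk.le, prefW_add k 1, ← length_prefW k, List.drop_left,
    show prefW 1 = cStr 0 from rfl, ← cStr_add, Nat.add_zero, List.take_length]

theorem exists_seg_omegaAP_eq_window {p L : ℕ} (hp : 4 ≤ p) (hL : L ≤ 6) :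
    ∃ q, ∃ r < 5, ∃ b₁ b₂ : Bool,
      p = 4 + q * 5 + r ∧ seg omegaAP p L = ((block 1 b₁ ++ block 1 b₂).drop r).take L := by
  obtain ⟨q, r, hr, rfl⟩ : ∃ q r, r < 5 ∧ p = 4 + q * 5 + r :=
    ⟨(p - 4) / 5, (p - 4) % 5, Nat.mod_lt _ (by norm_num), by omega⟩
  have hw : seg omegaAP (4 + q * 5) 10 = block 1 (omegaAP q) ++ block 1 (omegaAP (q + 1)) := by
    simpa [show seg omegaAP q 2 = [omegaAP q, omegaAP (q + 1)] from rfl]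
      using seg_omegaAP_blocks 1 q 2
  exact ⟨q, r, hr, _, _, rfl, by rw [seg_add_eq_take_drop _ (L := 10) (by omega), hw]⟩

theorem exists_eq_of_occursAt_block_one {b : Bool} {p : ℕ} (h : OccursAt omegaAP (block 1 b) p)
    (hp : 4 ≤ p) : ∃ q, p = 4 + q * 5 := by
  obtain ⟨q, r, hr, b₁, b₂, rfl, hseg⟩ := exists_seg_omegaAP_eq_window hp (L := 5) (by norm_num)
  have aligned : ∀ b b₁ b₂ : Bool, ∀ r < 5,
      ((block 1 b₁ ++ block 1 b₂).drop r).take 5 = block 1 b → r = 0 := by decide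
  rw [OccursAt, length_block, pow_one, hseg] at h
  exact ⟨q, by rw [aligned b b₁ b₂ r hr h, Nat.add_zero]⟩

theorem not_occursAt_four_trues {p : ℕ} (hp : 4 ≤ p) :
    ¬ OccursAt omegaAP [true, true, true, true] p := by
  obtain ⟨-, r, hr, b₁, b₂, -, hseg⟩ := exists_seg_omegaAP_eq_window hp (L := 4) (by norm_num)
  have no_run : ∀ b₁ b₂ : Bool, ∀ r < 5,
      ((block 1 b₁ ++ block 1 b₂).drop r).take 4 ≠ [true, true, true, true] := by decide
  exact no_run b₁ b₂ r hr ∘ hseg.symm.trans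

theorem occursAt_of_occursAt_blocks {k m : ℕ} {w : List Bool}
    (h : OccursAt omegaAP (blocks k w) (5 ^ k - 1 + m * 5 ^ k)) : OccursAt omegaAP w m := by
  rw [OccursAt, length_blocks, seg_omegaAP_blocks] at h
  exact blocks_injective k h

theorem four_le_of_pow_succ_le {k m : ℕ} (h : 5 ^ (k + 1) - 1 ≤ 5 ^ k - 1 + m * 5 ^ k) :
    4 ≤ m := by
  by_contra hm
  have : 0 < 5 ^ k := by positivity
  have : m * 5 ^ k ≤ 3 * 5 ^ k := Nat.mul_le_mul_right _ (by omega)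
  have : 5 ^ (k + 1) = 5 ^ k * 5 := pow_succ 5 k
  omega

theorem exists_eq_of_occursAt_block {k : ℕ} {b : Bool} {p : ℕ}
    (h : OccursAt omegaAP (block k b) p) (hp : 5 ^ k - 1 ≤ p) :
    ∃ m, p = 5 ^ k - 1 + m * 5 ^ k := by
  induction k generalizing b p with
  | zero => exact ⟨p, by simp⟩
  | succ k ih =>
    have hpow : 5 ^ (k + 1) = 5 ^ k * 5 := pow_succ 5 k
    have hprefix : block k b <+: block (k + 1) b := by
      simp only [block_succ, List.append_assoc]; exact List.prefix_append _ _
    obtain ⟨m, rfl⟩ := ih (OccursAt.of_prefix h hprefix) (by omega)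
    rw [block_add] at h
    obtain ⟨q, rfl⟩ := exists_eq_of_occursAt_block_one (occursAt_of_occursAt_blocks h)
      (four_le_of_pow_succ_le hp)
    exact ⟨q, by rw [hpow]; ring_nf; omega⟩

theorem infix_block_succ_of_occursAt {k p : ℕ} {x : List Bool} (hx : OccursAt omegaAP x p)
    (hp : 5 ^ k - 1 ≤ p) (hxk : x.length ≤ 5 ^ k) (c : Bool) : x <:+: block (k + 1) c := by
  have h5 : 0 < 5 ^ k := by positivity
  have := Nat.div_mul_le_self (p - (5 ^ k - 1)) (5 ^ k)
  have := Nat.lt_div_mul_add (a := p - (5 ^ k - 1)) h5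
  set m := (p - (5 ^ k - 1)) / 5 ^ k
  have hpair : ∀ b₁ b₂ c : Bool, [b₁, b₂] <:+: block 1 c := by decide
  have hx' : x <:+: seg omegaAP (5 ^ k - 1 + m * 5 ^ k) (2 * 5 ^ k) :=
    hx.infix_seg (by omega) (by omega)
  rw [seg_omegaAP_blocks] at hx'
  rw [block_add]
  exact hx'.trans ((hpair _ _ c).flatMap _)

theorem ap_omegaAP : AP omegaAP := by
  intro x hx
  obtain ⟨p, hp, hpk⟩ := hx.exists_gt (5 ^ x.length)
  have hinfix := infix_block_succ_of_occursAt hp (by omega) (Nat.lt_pow_self (by norm_num)).le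
  refine ⟨2 * 5 ^ (x.length + 1), fun j => ?_⟩
  have := Nat.lt_div_mul_add (a := j) (show 0 < 5 ^ (x.length + 1) by positivity)
  have := Nat.div_mul_le_self j (5 ^ (x.length + 1))
  obtain ⟨i, hi₁, hi₂, hocc⟩ := exists_occursAt_of_infix_seg
    ((seg_omegaAP_block _ _).symm ▸ hinfix (omegaAP (j / 5 ^ (x.length + 1))))
  exact ⟨i, by omega, by omega, hocc⟩

theorem not_eap_omegaAP : ¬ EAP omegaAP := by
  rintro ⟨n, hsap⟩
  have hn : n ≤ 5 ^ n - 1 := Nat.le_sub_one_of_lt (Nat.lt_pow_self (by norm_num))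
  obtain ⟨l, hl⟩ := hsap (cStr n) ⟨5 ^ n - 1 - n, by
    rw [occursAt_shift_iff, Nat.add_sub_cancel' hn]; exact occursAt_cStr n⟩
  obtain ⟨i, hi, -, hocc⟩ := hl (5 ^ (n + 1))
  rw [occursAt_shift_iff] at hocc
  obtain ⟨m, hm⟩ := exists_eq_of_occursAt_block (k := n) (b := true)
    (hocc.of_prefix ⟨aStr n ++ aStr n ++ aStr n, by simp [cStr, block, List.append_assoc]⟩)
    (by omega)
  have hc : cStr n = blocks n [true, true, true, true] := cStr_add n 0
  rw [hm, hc] at hocc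
  exact not_occursAt_four_trues (four_le_of_pow_succ_le (k := n) (by omega))
    (occursAt_of_occursAt_blocks hocc)

end OmegaAP

/-- There is a binary sequence (namely `ω = c_0 c_1 c_2 ⋯`) that is almost periodic
but not eventually strongly almost periodic. -/
theorem ap_not_eap : AP omegaAP ∧ ¬ EAP omegaAP :=
  ⟨OmegaAP.ap_omegaAP, OmegaAP.not_eap_omegaAP⟩
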